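/- arXiv:1211.6587 — 2 statements merged into one kernel-verified Lean document; each statement's English description precedes it below -/
import Mathlib

section
/- Let 0 < M < 1, q ≥ 1, α ∈ (0,1], m ∈ (0,1), μ > 0, and u, v > 0 with u + v = 1. Then ∫₀¹ t^μ · M^{q t α (1−m)} dt ≤ u²/(μ+u) + v²(M^{qα(1−m)/v} − 1)/(qα(1−m) ln M). -/
open Real MeasureTheory

theorem integral_rpow_mul_rpow_le_young
    (M q α m μ u v : ℝ) (hM0 : 0 < M) (hM1 : M < 1) (hq : 1 ≤ q)
    (hα : α ∈ Set.Ioc (0:ℝ) 1) (hm : m ∈ Set.Ioo (0:ℝ) 1) (hμ : 0 < μ)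
    (hu : 0 < u) (hv : 0 < v) (huv : u + v = 1) :
    (∫ t in (0:ℝ)..1, t ^ μ * M ^ (q * t * α * (1 - m))) ≤
      u ^ 2 / (μ + u) +
        v ^ 2 * (M ^ (q * α * (1 - m) / v) - 1) / (q * α * (1 - m) * Real.log M) := by
  obtain ⟨hα0, hα1⟩ := hα
  obtain ⟨hm0, hm1⟩ := hm
  have hq0 : 0 < q := lt_of_lt_of_le one_pos hq
  have hm1' : 0 < 1 - m := by linarith
  have hc : 0 < q * α * (1 - m) := by positivity
  set c : ℝ := q * α * (1 - m) with hcdef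
  have hL : Real.log M < 0 := Real.log_neg hM0 hM1
  set L : ℝ := Real.log M with hLdef
  have ha : c * L / v < 0 := div_neg_of_neg_of_pos (mul_neg_of_pos_of_neg hc hL) hv
  have hane : c * L / v ≠ 0 := ne_of_lt ha
  -- conjugate exponents
  have hu1 : u < 1 := by linarith
  have hpq : (1 / u).HolderConjugate (1 / v) := by
    constructor
    · simp only [one_div, inv_inv, inv_one]; exact huv
    · positivity
    · positivity
  -- continuity of the integrand
  have hcont : ContinuousOn (fun t : ℝ => t ^ μ * M ^ (q * t * α * (1 - m)))
      (Set.uIcc (0:ℝ) 1) := by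
    apply ContinuousOn.mul
    · intro t _
      exact (Real.continuousAt_rpow_const t μ (Or.inr hμ.le)).continuousWithinAt
    · apply Continuous.continuousOn
      have : (fun t : ℝ => M ^ (q * t * α * (1 - m))) =
          fun t : ℝ => Real.exp (L * (q * t * α * (1 - m))) := by
        funext t; rw [Real.rpow_def_of_pos hM0]
      rw [this]
      fun_prop
  have hcontg : ContinuousOn (fun t : ℝ => u * t ^ (μ / u) + v * M ^ (c * t / v))
      (Set.uIcc (0:ℝ) 1) := by
    apply ContinuousOn.add
    · apply ContinuousOn.const_smul ?_ u
      intro t _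
      exact (Real.continuousAt_rpow_const t (μ / u) (Or.inr (by positivity))).continuousWithinAt
    · apply Continuous.continuousOn
      have : (fun t : ℝ => v * M ^ (c * t / v)) =
          fun t : ℝ => v * Real.exp (L * (c * t / v)) := by
        funext t; rw [Real.rpow_def_of_pos hM0]
      rw [this]
      fun_prop
  -- pointwise Young inequality
  have key : (∫ t in (0:ℝ)..1, t ^ μ * M ^ (q * t * α * (1 - m))) ≤
      ∫ t in (0:ℝ)..1, u * t ^ (μ / u) + v * M ^ (c * t / v) := by
    apply intervalIntegral.integral_mono_on (by norm_num)
      (hcont.intervalIntegrable) (hcontg.intervalIntegrable)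
    intro t ht
    obtain ⟨ht0, ht1⟩ := ht
    have h1 : (0:ℝ) ≤ t ^ μ := Real.rpow_nonneg ht0 μ
    have h2 : (0:ℝ) ≤ M ^ (q * t * α * (1 - m)) := Real.rpow_nonneg hM0.le _
    have := Real.young_inequality_of_nonneg h1 h2 hpq
    calc t ^ μ * M ^ (q * t * α * (1 - m))
        ≤ (t ^ μ) ^ (1 / u) / (1 / u) + (M ^ (q * t * α * (1 - m))) ^ (1 / v) / (1 / v) := this
      _ = u * t ^ (μ / u) + v * M ^ (c * t / v) := by
          rw [← Real.rpow_mul ht0, ← Real.rpow_mul hM0.le]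
          have e1 : μ * (1 / u) = μ / u := by ring
          have e2 : q * t * α * (1 - m) * (1 / v) = c * t / v := by rw [hcdef]; ring
          rw [e1, e2, div_div_eq_mul_div, div_one, div_div_eq_mul_div, div_one]
          ring
  refine key.trans_eq ?_
  -- compute the right-hand integral
  have hint1 : IntervalIntegrable (fun t : ℝ => u * t ^ (μ / u)) volume 0 1 := by
    apply ContinuousOn.intervalIntegrable
    apply ContinuousOn.const_smul ?_ u
    intro t _
    exact (Real.continuousAt_rpow_const t (μ / u) (Or.inr (by positivity))).continuousWithinAt
  have hint2 : IntervalIntegrable (fun t : ℝ => v * M ^ (c * t / v)) volume 0 1 := by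
    apply ContinuousOn.intervalIntegrable
    apply Continuous.continuousOn
    have : (fun t : ℝ => v * M ^ (c * t / v)) =
        fun t : ℝ => v * Real.exp (L * (c * t / v)) := by
      funext t; rw [Real.rpow_def_of_pos hM0]
    rw [this]; fun_prop
  rw [intervalIntegral.integral_add hint1 hint2]
  have hI1 : (∫ t in (0:ℝ)..1, u * t ^ (μ / u)) = u ^ 2 / (μ + u) := by
    rw [intervalIntegral.integral_const_mul, integral_rpow (Or.inl (by have := div_pos hμ hu; linarith))]
    rw [Real.one_rpow, Real.zero_rpow (by positivity : (0:ℝ) < μ / u + 1).ne']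
    field_simp
    ring
  have hI2 : (∫ t in (0:ℝ)..1, v * M ^ (c * t / v)) =
      v ^ 2 * (M ^ (c / v) - 1) / (c * L) := by
    rw [intervalIntegral.integral_const_mul]
    have heq : (fun t : ℝ => M ^ (c * t / v)) = fun t : ℝ => Real.exp ((c * L / v) * t) := by
      funext t; rw [Real.rpow_def_of_pos hM0]; congr 1; ring
    rw [heq, intervalIntegral.integral_comp_mul_left Real.exp hane, mul_zero, mul_one,
      integral_exp, Real.exp_zero]
    have hexp : Real.exp (c * L / v) = M ^ (c / v) := by
      rw [Real.rpow_def_of_pos hM0]; congr 1; ring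
    rw [smul_eq_mul, hexp]
    field_simp
  rw [hI1, hI2]
end

section
/- Let g be a positive, decreasing, (α,m)-geometrically convex function on [min{1,a}, b], where a ∈ [0,∞), b ≥ 1, (α,m) ∈ (0,1] × (0,1), and suppose g(y) ≤ M < 1 for y ∈ [min{1,a}, b]. Then for every x ∈ [a,b] and q ≥ 1: ∫₀¹ g(x^t · b^{m(1−t)})^q dt ≤ M^{mq} · (M^{qα(1−m)} − 1)/(qα(1−m) ln M). -/
open Real MeasureTheory

theorem integral_geom_convex_bound
    (g : ℝ → ℝ) (a b M α m q : ℝ) (ha : 0 ≤ a) (hb : 1 ≤ b) (hq : 1 ≤ q)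
    (hα : α ∈ Set.Ioc (0:ℝ) 1) (hm : m ∈ Set.Ioo (0:ℝ) 1)
    (hgpos : ∀ y ∈ Set.Icc (min 1 a) b, 0 < g y)
    (hdec : AntitoneOn g (Set.Icc (min 1 a) b))
    (hconv : ∀ c ∈ Set.Icc (min 1 a) b, ∀ d ∈ Set.Icc (min 1 a) b,
      ∀ t ∈ Set.Icc (0:ℝ) 1,
        g (c ^ t * d ^ (m * (1 - t))) ≤ g c ^ (t ^ α) * g d ^ (m * (1 - t ^ α)))
    (hM : ∀ y ∈ Set.Icc (min 1 a) b, g y ≤ M) (hM1 : M < 1)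
    (x : ℝ) (hx : x ∈ Set.Icc a b) :
    (∫ t in (0:ℝ)..1, g (x ^ t * b ^ (m * (1 - t))) ^ q) ≤
      M ^ (m * q) *
        ((M ^ (q * α * (1 - m)) - 1) / (q * α * (1 - m) * Real.log M)) := by
  obtain ⟨hα0, hα1⟩ := hα
  obtain ⟨hm0, hm1⟩ := hm
  obtain ⟨hxa, hxb⟩ := hx
  have hq0 : (0:ℝ) < q := lt_of_lt_of_le one_pos hq
  have hminb : min 1 a ≤ b := le_trans (min_le_left _ _) hb
  have hbmem : b ∈ Set.Icc (min 1 a) b := ⟨hminb, le_refl b⟩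
  have hM0 : 0 < M := lt_of_lt_of_le (hgpos b hbmem) (hM b hbmem)
  have hlogM : Real.log M < 0 := Real.log_neg hM0 hM1
  have hc : 0 < q * α * (1 - m) := by
    have : 0 < 1 - m := by linarith
    positivity
  set k : ℝ := q * α * (1 - m) * Real.log M with hk
  have hk0 : k < 0 := mul_neg_of_pos_of_neg hc hlogM
  have hkne : k ≠ 0 := ne_of_lt hk0
  have hxmem : x ∈ Set.Icc (min 1 a) b := ⟨le_trans (min_le_right _ _) hxa, hxb⟩
  -- the RHS as an integral
  have hInt : (∫ t in (0:ℝ)..1, M ^ (m*q) * Real.exp (k * t)) =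
      M ^ (m * q) * ((M ^ (q * α * (1 - m)) - 1) / (q * α * (1 - m) * Real.log M)) := by
    have hek : Real.exp k = M ^ (q * α * (1 - m)) := by
      rw [Real.rpow_def_of_pos hM0, hk]; ring_nf
    have hexpint : (∫ t in (0:ℝ)..1, Real.exp (k * t)) = (Real.exp k - 1)/k := by
      rw [intervalIntegral.integral_comp_mul_left (fun u => Real.exp u) hkne]
      simp [integral_exp, hkne]
      ring
    rw [intervalIntegral.integral_const_mul, hexpint, hek]
  -- pointwise bound
  have key : ∀ t ∈ Set.Icc (0:ℝ) 1,
      g (x ^ t * b ^ (m * (1 - t))) ^ q ≤ M ^ (m*q) * Real.exp (k * t) := by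
    intro t ht
    obtain ⟨ht0, ht1⟩ := ht
    have hinner : x ^ t * b ^ (m * (1 - t)) ∈ Set.Icc (min 1 a) b := by
      have hbexp0 : 0 ≤ m * (1 - t) := by nlinarith
      have hb1 : (1:ℝ) ≤ b ^ (m * (1 - t)) := Real.one_le_rpow hb hbexp0
      have hxt0 : 0 ≤ x ^ t := Real.rpow_nonneg (le_trans ha hxa) t
      constructor
      · rcases eq_or_ne t 0 with ht' | ht'
        · subst ht'
          rw [Real.rpow_zero, one_mul]
          calc min 1 a ≤ 1 := min_le_left _ _
            _ ≤ b ^ (m * (1 - (0:ℝ))) := Real.one_le_rpow hb (by nlinarith)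
        rcases eq_or_lt_of_le (le_trans ha hxa) with hx0 | hx0
        · have ha0 : a = 0 := le_antisymm (by rw [← hx0] at hxa; exact hxa) ha
          rw [← hx0, Real.zero_rpow ht', zero_mul, ha0]
          simp
        · have hxtge : min 1 a ≤ x ^ t := by
            rcases le_or_gt 1 x with h1x | h1x
            · calc min 1 a ≤ 1 := min_le_left _ _
                _ ≤ x ^ t := Real.one_le_rpow h1x ht0
            · calc min 1 a ≤ a := min_le_right _ _
                _ ≤ x := hxa
                _ = x ^ (1:ℝ) := (Real.rpow_one x).symm
                _ ≤ x ^ t := Real.rpow_le_rpow_of_exponent_ge hx0 h1x.le ht1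
          calc min 1 a ≤ x ^ t := hxtge
            _ = x ^ t * 1 := (mul_one _).symm
            _ ≤ x ^ t * b ^ (m * (1 - t)) := by
                exact mul_le_mul_of_nonneg_left hb1 hxt0
      · have h1 : x ^ t ≤ b ^ t := Real.rpow_le_rpow (le_trans ha hxa) hxb ht0
        have h2 : x ^ t * b ^ (m * (1 - t)) ≤ b ^ t * b ^ (m * (1 - t)) :=
          mul_le_mul_of_nonneg_right h1 (Real.rpow_nonneg (by linarith) _)
        rw [← Real.rpow_add (by linarith : (0:ℝ) < b)] at h2
        calc x ^ t * b ^ (m * (1 - t)) ≤ b ^ (t + m * (1 - t)) := h2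
          _ ≤ b ^ (1:ℝ) := by
              apply Real.rpow_le_rpow_of_exponent_le hb
              nlinarith
          _ = b := Real.rpow_one b
    have hg0 : 0 ≤ g (x ^ t * b ^ (m * (1 - t))) := (hgpos _ hinner).le
    have htα0 : 0 ≤ t ^ α := Real.rpow_nonneg ht0 α
    have htα1 : t ^ α ≤ 1 := Real.rpow_le_one ht0 ht1 hα0.le
    have hstep1 : g (x ^ t * b ^ (m * (1 - t))) ≤ M ^ (t ^ α) * M ^ (m * (1 - t ^ α)) := by
      have h1 := hconv x hxmem b hbmem t ⟨ht0, ht1⟩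
      refine le_trans h1 (mul_le_mul ?_ ?_ ?_ ?_)
      · exact Real.rpow_le_rpow (hgpos x hxmem).le (hM x hxmem) htα0
      · exact Real.rpow_le_rpow (hgpos b hbmem).le (hM b hbmem) (by nlinarith)
      · exact Real.rpow_nonneg (hgpos b hbmem).le _
      · exact Real.rpow_nonneg hM0.le _
    have hstep1' : g (x ^ t * b ^ (m * (1 - t))) ≤ M ^ (t ^ α + m * (1 - t ^ α)) := by
      rwa [Real.rpow_add hM0]
    have hstep2 : g (x ^ t * b ^ (m * (1 - t))) ^ q ≤ M ^ ((t ^ α + m * (1 - t ^ α)) * q) := by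
      rw [Real.rpow_mul hM0.le]
      exact Real.rpow_le_rpow hg0 hstep1' hq0.le
    have hexp : m * q + q * α * (1 - m) * t ≤ (t ^ α + m * (1 - t ^ α)) * q := by
      have htt : α * t ≤ t ^ α := by
        rcases eq_or_lt_of_le ht0 with h0 | h0
        · rw [← h0, Real.zero_rpow hα0.ne']; simp
        · have : t ≤ t ^ α := by
            calc t = t ^ (1:ℝ) := (Real.rpow_one t).symm
              _ ≤ t ^ α := Real.rpow_le_rpow_of_exponent_ge h0 ht1 hα1
          nlinarith
      nlinarith
    have hstep3 : M ^ ((t ^ α + m * (1 - t ^ α)) * q) ≤ M ^ (m * q + q * α * (1 - m) * t) :=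
      Real.rpow_le_rpow_of_exponent_ge hM0 hM1.le hexp
    have heq : M ^ (m * q + q * α * (1 - m) * t) = M ^ (m * q) * Real.exp (k * t) := by
      rw [Real.rpow_add hM0]
      congr 1
      rw [Real.rpow_def_of_pos hM0, hk]
      ring_nf
    calc g (x ^ t * b ^ (m * (1 - t))) ^ q
        ≤ M ^ ((t ^ α + m * (1 - t ^ α)) * q) := hstep2
      _ ≤ M ^ (m * q + q * α * (1 - m) * t) := hstep3
      _ = M ^ (m * q) * Real.exp (k * t) := heq
  -- RHS integrand is interval integrable
  have hIntG : IntervalIntegrable (fun t => M ^ (m*q) * Real.exp (k * t)) volume 0 1 :=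
    (Continuous.intervalIntegrable (continuous_const.mul (Real.continuous_exp.comp (continuous_const.mul continuous_id))) 0 1)
  by_cases hf : IntervalIntegrable (fun t => g (x ^ t * b ^ (m * (1 - t))) ^ q) volume 0 1
  · calc (∫ t in (0:ℝ)..1, g (x ^ t * b ^ (m * (1 - t))) ^ q)
        ≤ ∫ t in (0:ℝ)..1, M ^ (m*q) * Real.exp (k * t) :=
          intervalIntegral.integral_mono_on zero_le_one hf hIntG key
      _ = _ := hInt
  · rw [intervalIntegral.integral_undef hf]
    rw [← hInt]
    apply intervalIntegral.integral_nonneg zero_le_one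
    intro u _
    positivity
end
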